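/- Let G be an abelian group, φ : G → G a group endomorphism, k a positive integer, and H a subgroup of G that is both φ-inert and φ^k-inert, and which satisfies T_n(φ^k, H) = T_{kn-k+1}(φ, H) for every positive integer n (for instance when H = T_k(φ,K) for some subgroup K). Then ent̃(φ^k, H) = k · ent̃(φ, H). -/

import Mathlib

open Filter Topology ENNReal

variable {G : Type*}

/-- The `n`-th partial `φ`-trajectory of a subgroup `H`:
`T_n(φ,H) = H + φ(H) + ... + φ^{n-1}(H)`. -/
noncomputable def traj [AddCommGroup G] (φ : AddMonoid.End G) (H : AddSubgroup G) (n : ℕ) :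
    AddSubgroup G :=
  ⨆ i ∈ Finset.range n, H.map (φ ^ i)

/-- `H` is `φ`-inert if `(H + φ(H))/H` is finite. -/
def IsInert [AddCommGroup G] (φ : AddMonoid.End G) (H : AddSubgroup G) : Prop :=
  Finite (↥(H ⊔ H.map φ) ⧸ H.addSubgroupOf (H ⊔ H.map φ))

/-- The sequence `n ↦ log |T_n(φ,H)/H| / n`. -/
noncomputable def entFun [AddCommGroup G] (φ : AddMonoid.End G) (H : AddSubgroup G) (n : ℕ) : ℝ :=
  Real.log (Nat.card (↥(traj φ H n) ⧸ H.addSubgroupOf (traj φ H n))) / n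

/-- The intrinsic entropy of `φ` with respect to `H`: the limit of `entFun φ H`. -/
noncomputable def entWrt [AddCommGroup G] (φ : AddMonoid.End G) (H : AddSubgroup G) : ℝ :=
  limUnder atTop (entFun φ H)

/-- The intrinsic algebraic entropy of `φ`. -/
noncomputable def intrinsicEnt [AddCommGroup G] (φ : AddMonoid.End G) : ℝ≥0∞ :=
  ⨆ (H : AddSubgroup G) (_ : IsInert φ H), ENNReal.ofReal (entWrt φ H)

/-- The `φ`-trajectory of `H`: `T(φ,H) = ⋃_{n ≥ 1} T_n(φ,H)`. -/
noncomputable def trajAll [AddCommGroup G] (φ : AddMonoid.End G) (H : AddSubgroup G) :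
    AddSubgroup G :=
  ⨆ n : ℕ, traj φ H (n + 1)

section Aux

variable [AddCommGroup G] (φ : AddMonoid.End G) (H : AddSubgroup G)

lemma traj_zero : traj φ H 0 = ⊥ := by simp [traj]

lemma traj_succ' (n : ℕ) : traj φ H (n + 1) = traj φ H n ⊔ H.map (φ ^ n) := by
  rw [traj, traj, Finset.range_add_one, Finset.iSup_insert, sup_comm]

lemma traj_one : traj φ H 1 = H := by
  rw [traj_succ', traj_zero, bot_sup_eq, pow_zero]
  exact AddSubgroup.map_id H

lemma traj_mono : Monotone (traj φ H) :=
  monotone_nat_of_le_succ fun n => by rw [traj_succ']; exact le_sup_left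

lemma map_pow_succ (n : ℕ) : (H.map (φ ^ n)).map φ = H.map (φ ^ (n + 1)) := by
  rw [AddSubgroup.map_map (g := φ) (f := φ ^ n), pow_succ']
  rfl

lemma map_traj_le (n : ℕ) : (traj φ H n).map φ ≤ traj φ H (n + 1) := by
  induction n with
  | zero => rw [traj_zero, AddSubgroup.map_bot (f := φ)]; exact bot_le
  | succ n ih =>
    rw [traj_succ' φ H n, AddSubgroup.map_sup (f := φ), traj_succ' φ H (n + 1), map_pow_succ]
    exact sup_le (ih.trans le_sup_left) le_sup_right

lemma traj_sup (n : ℕ) :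
    traj φ H (n + 2) = traj φ H (n + 1) ⊔ (traj φ H (n + 1)).map φ := by
  apply le_antisymm
  · rw [traj_succ' φ H (n + 1)]
    refine sup_le le_sup_left ?_
    rw [← map_pow_succ]
    exact le_trans (AddSubgroup.map_mono (by rw [traj_succ']; exact le_sup_right)) le_sup_right
  · exact sup_le (traj_mono φ H (Nat.le_succ _)) (map_traj_le φ H (n + 1))

/-- The key step: `φ` induces a surjection `T_{n+2}/T_{n+1} → T_{n+3}/T_{n+2}`, so the
successive relative indices are finite and nonincreasing. -/
lemma traj_step (n : ℕ)
    (hfin : Finite (↥(traj φ H (n+2)) ⧸ (traj φ H (n+1)).addSubgroupOf (traj φ H (n+2)))) :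
    Finite (↥(traj φ H (n+3)) ⧸ (traj φ H (n+2)).addSubgroupOf (traj φ H (n+3))) ∧
      (traj φ H (n+2)).relIndex (traj φ H (n+3)) ≤
        (traj φ H (n+1)).relIndex (traj φ H (n+2)) := by
  set T := traj φ H with hT
  have hmem : ∀ x : ↥(T (n+2)), φ x.1 ∈ T (n+3) := fun x =>
    map_traj_le φ H (n+2) (AddSubgroup.mem_map_of_mem _ x.2)
  let g : ↥(T (n+2)) →+ ↥(T (n+3)) :=
    { toFun := fun x => ⟨φ x.1, hmem x⟩
      map_zero' := by ext; simp
      map_add' := fun x y => by ext; simp }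
  have hle : (T (n+1)).addSubgroupOf (T (n+2)) ≤
      ((T (n+2)).addSubgroupOf (T (n+3))).comap g := by
    intro x hx
    have : φ x.1 ∈ T (n+2) := map_traj_le φ H (n+1) (AddSubgroup.mem_map_of_mem _ hx)
    simpa [g, AddSubgroup.mem_addSubgroupOf, AddSubgroup.mem_comap] using this
  let q := QuotientAddGroup.map _ _ g hle
  have hsurj : Function.Surjective q := by
    intro y
    obtain ⟨⟨y', hy'⟩, rfl⟩ := QuotientAddGroup.mk_surjective y
    have : y' ∈ T (n+2) ⊔ (T (n+2)).map φ := by rw [← traj_sup]; exact hy'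
    obtain ⟨a, ha, b, hb, hab⟩ := AddSubgroup.mem_sup.mp this
    obtain ⟨s, hs, rfl⟩ := hb
    refine ⟨QuotientAddGroup.mk ⟨s, hs⟩, ?_⟩
    have hq : q (QuotientAddGroup.mk ⟨s, hs⟩) = QuotientAddGroup.mk (g ⟨s, hs⟩) := rfl
    rw [hq, QuotientAddGroup.eq]
    show -(g ⟨s, hs⟩).1 + y' ∈ T (n+2)
    have : -(g ⟨s, hs⟩).1 + y' = a := by
      simp only [g, AddMonoidHom.coe_mk, ZeroHom.coe_mk]
      rw [← hab, add_comm a]; exact neg_add_cancel_left _ _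
    rw [this]; exact ha
  exact ⟨Finite.of_surjective q hsurj, Nat.card_le_card_of_surjective q hsurj⟩

end Aux

/-- If `H` is both `φ`-inert and `φ^k`-inert and satisfies
`T_n(φ^k, H) = T_{kn-k+1}(φ, H)` for every `n ≥ 1`, then `ent̃(φ^k, H) = k · ent̃(φ, H)`. -/
theorem entWrt_pow [AddCommGroup G] (φ : AddMonoid.End G) (k : ℕ) (hk : 0 < k)
    (H : AddSubgroup G) (hH : IsInert φ H) (hHk : IsInert (φ ^ k) H)
    (htraj : ∀ n : ℕ, 0 < n → traj (φ ^ k) H n = traj φ H (k * n - k + 1)) :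
    ∃ L : ℝ, Tendsto (entFun φ H) atTop (𝓝 L) ∧
      Tendsto (entFun (φ ^ k) H) atTop (𝓝 ((k : ℝ) * L)) := by
  -- finiteness of all successive quotients
  have hfin : ∀ n : ℕ,
      Finite (↥(traj φ H (n+2)) ⧸ (traj φ H (n+1)).addSubgroupOf (traj φ H (n+2))) := by
    intro n
    induction n with
    | zero =>
      rw [show traj φ H 2 = H ⊔ H.map φ by
          rw [show (2:ℕ) = 1+1 from rfl, traj_succ', traj_one, pow_one], traj_one]
      exact hH
    | succ n ih => exact (traj_step φ H n ih).1
  -- the successive indices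
  set d : ℕ → ℕ := fun n => (traj φ H (n+1)).relIndex (traj φ H (n+2)) with hd
  have hdanti : Antitone d := antitone_nat_of_succ_le fun n => (traj_step φ H n (hfin n)).2
  have hdpos : ∀ n, 0 < d n := fun n => by
    have := hfin n
    exact Nat.card_pos (α := ↥(traj φ H (n+2)) ⧸ (traj φ H (n+1)).addSubgroupOf (traj φ H (n+2)))
  -- the indices stabilize at the value `c`
  set c : ℕ := sInf (Set.range d) with hc
  obtain ⟨N, hN⟩ : ∃ N, d N = c := Nat.sInf_mem (Set.range_nonempty d)
  have hdc : ∀ n, N ≤ n → d n = c := fun n hn =>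
    le_antisymm (hN ▸ hdanti hn) (Nat.sInf_le ⟨n, rfl⟩)
  have hcpos : 0 < c := hN ▸ hdpos N
  -- cumulated indices
  set f : ℕ → ℕ := fun n => H.relIndex (traj φ H (n+1)) with hf
  have hHle : ∀ n : ℕ, H ≤ traj φ H (n+1) := fun n =>
    le_trans (le_of_eq (traj_one φ H).symm) (traj_mono φ H (Nat.succ_le_succ (Nat.zero_le n)))
  have hfs : ∀ n, f (n+1) = f n * d n := fun n =>
    (AddSubgroup.relIndex_mul_relIndex H (traj φ H (n+1)) (traj φ H (n+2)) (hHle n)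
      (traj_mono φ H (Nat.le_succ _))).symm
  have hfpos : ∀ n, 0 < f n := by
    intro n
    induction n with
    | zero =>
      have h0 : f 0 = 1 := by
        show H.relIndex (traj φ H 1) = 1
        rw [traj_one]; exact AddSubgroup.relIndex_self H
      omega
    | succ n ih => rw [hfs n]; exact Nat.mul_pos ih (hdpos n)
  have hformula : ∀ n, N ≤ n → f n = f N * c ^ (n - N) := by
    intro n hn
    induction n, hn using Nat.le_induction with
    | base => simp
    | succ n hn ih =>
      rw [hfs n, ih, hdc n hn, mul_assoc, ← pow_succ]
      rw [show n + 1 - N = n - N + 1 by omega]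
  -- identification of `entFun` with `relindex`
  have hent : ∀ n : ℕ, entFun φ H n = Real.log (H.relIndex (traj φ H n)) / n := fun n => rfl
  have hentk : ∀ n : ℕ, entFun (φ^k) H n =
      Real.log (H.relIndex (traj (φ^k) H n)) / n := fun n => rfl
  have hfN0 : (f N : ℝ) ≠ 0 := Nat.cast_ne_zero.mpr (hfpos N).ne'
  have hc0 : (c : ℝ) ≠ 0 := Nat.cast_ne_zero.mpr hcpos.ne'
  have key1 : Tendsto (entFun φ H) atTop (𝓝 (Real.log c)) := by
    have htend : Tendsto
        (fun n : ℕ => (Real.log (f N) - (N+1) * Real.log c) / n + Real.log c) atTop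
        (𝓝 (0 + Real.log c)) :=
      (tendsto_const_div_atTop_nhds_zero_nat _).add tendsto_const_nhds
    rw [zero_add] at htend
    refine htend.congr' ?_
    filter_upwards [eventually_ge_atTop (N+1)] with n hn
    obtain ⟨p, rfl⟩ : ∃ p, n = p + 1 := ⟨n - 1, by omega⟩
    have hpN : N ≤ p := by omega
    rw [hent, show H.relIndex (traj φ H (p+1)) = f p from rfl, hformula p hpN]
    have h1 : ((f N * c ^ (p - N) : ℕ) : ℝ) = (f N : ℝ) * (c : ℝ) ^ (p - N) := by
      push_cast; ring
    rw [h1, Real.log_mul hfN0 (pow_ne_zero _ hc0), Real.log_pow, Nat.cast_sub hpN]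
    have h3 : ((p : ℝ) + 1) ≠ 0 := by positivity
    push_cast
    field_simp
    ring
  refine ⟨Real.log c, key1, ?_⟩
  -- second limit
  set m : ℕ → ℕ := fun n => k * n - k + 1 with hm
  have hmge : ∀ n, n ≤ m n := by
    intro n
    rcases n with _ | n
    · simp [hm]
    · have h1 : n ≤ k * n := Nat.le_mul_of_pos_left n hk
      have h2 : k * (n + 1) = k * n + k := by ring
      simp only [hm]
      omega
  have hmtop : Tendsto m atTop atTop := tendsto_atTop_mono hmge tendsto_id
  have hcomp : Tendsto (fun n => entFun φ H (m n)) atTop (𝓝 (Real.log c)) :=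
    key1.comp hmtop
  have hratio : Tendsto (fun n : ℕ => ((m n : ℕ) : ℝ) / n) atTop (𝓝 (k : ℝ)) := by
    have htend : Tendsto (fun n : ℕ => ((1 : ℝ) - k) / n + k) atTop (𝓝 (0 + k)) :=
      (tendsto_const_div_atTop_nhds_zero_nat _).add tendsto_const_nhds
    rw [zero_add] at htend
    refine htend.congr' ?_
    filter_upwards [eventually_ge_atTop 1] with n hn
    have hkn : k ≤ k * n := Nat.le_mul_of_pos_right k hn
    have h1 : ((m n : ℕ) : ℝ) = (k : ℝ) * n - k + 1 := by
      simp only [hm]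
      push_cast [Nat.cast_sub hkn]
      ring
    have h2 : (n : ℝ) ≠ 0 := by positivity
    rw [h1]
    field_simp
    ring
  have hmul := hcomp.mul hratio
  rw [show Real.log c * (k : ℝ) = (k : ℝ) * Real.log c from mul_comm _ _] at hmul
  refine hmul.congr' ?_
  filter_upwards [eventually_ge_atTop 1] with n hn
  have hmn : 0 < m n := Nat.lt_of_lt_of_le hn (hmge n)
  rw [hentk, htraj n hn, hent]
  have h2 : ((m n : ℕ) : ℝ) ≠ 0 := Nat.cast_ne_zero.mpr hmn.ne'
  have hn0 : (n : ℝ) ≠ 0 := Nat.cast_ne_zero.mpr (by omega)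
  show Real.log (H.relIndex (traj φ H (m n))) / (m n) * (((m n : ℕ) : ℝ) / n)
      = Real.log (H.relIndex (traj φ H (m n))) / n
  field_simp
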